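/- arXiv:1204.3086 — 2 statements merged into one kernel-verified Lean document; each statement's English description precedes it below -/
import Mathlib

section
/- (Łojasiewicz inequality for smooth transversal functions of two variables.) Assume v is a C^∞ function on [0,1]² satisfying the transversality condition (TC). Then there exist constants C > 0 and b > 0, depending only on v, such that for every ε > 0 and every E ∈ ℝ, mes { x ∈ [0,1]² : |v(x) − E| < ε } ≤ C·ε^b. -/
open MeasureTheory Filter Topology

noncomputable section

/-- The closed unit square `[0,1]²`, a fundamental domain for the torus `𝕋²`. -/
def unitSquare : Set (ℝ × ℝ) := Set.Icc 0 1

/-- The mixed partial derivative `∂^m v` of a function of two real variables. -/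
def pder (m : ℕ × ℕ) (v : ℝ × ℝ → ℝ) (x : ℝ × ℝ) : ℝ :=
  iteratedDeriv m.1 (fun t => iteratedDeriv m.2 (fun u => v (t, u)) x.2) x.1

/-- `v` is `1`-periodic in each variable. -/
def Periodic2 (v : ℝ × ℝ → ℝ) : Prop :=
  ∀ x : ℝ × ℝ, v (x.1 + 1, x.2) = v x ∧ v (x.1, x.2 + 1) = v x

/-- The Gevrey class `G^s(𝕋²)`. -/
def GevreyClass (s : ℝ) (v : ℝ × ℝ → ℝ) : Prop :=
  ContDiff ℝ (⊤ : ℕ∞) v ∧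
    ∃ M K : ℝ, 0 < M ∧ 0 < K ∧ ∀ m : ℕ × ℕ, ∀ x : ℝ × ℝ,
      |pder m v x| ≤ M * K ^ (m.1 + m.2) * ((m.1.factorial * m.2.factorial : ℝ)) ^ s

/-- The transversality condition (TC): `v` is not flat at any point. -/
def Transversal (v : ℝ × ℝ → ℝ) : Prop :=
  ∀ x : ℝ × ℝ, ∃ m : ℕ × ℕ, m.1 + m.2 ≠ 0 ∧ pder m v x ≠ 0

/-- Distance from a real number to the nearest integer. -/
def distInt (t : ℝ) : ℝ := |t - round t|

/-- Diophantine condition `DC_κ` for a single frequency. -/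
def DCone (κ ω : ℝ) : Prop :=
  ∀ l : ℤ, l ≠ 0 →
    κ / (|(l : ℝ)| * Real.log (1 + |(l : ℝ)|) ^ 2) < distInt ((l : ℝ) * ω)

/-- Diophantine condition `DC_κ` (with exponent `A`) for a multi-frequency. -/
def DCtwo (A κ : ℝ) (ω : ℝ × ℝ) : Prop :=
  ∀ l : ℤ × ℤ, l ≠ 0 →
    κ / (|(l.1 : ℝ)| + |(l.2 : ℝ)|) ^ A <
      distInt ((l.1 : ℝ) * ω.1 + (l.2 : ℝ) * ω.2)

/-- The skew-shift `S_ω(x₁,x₂) = (x₁+x₂, x₂+ω)`. -/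
def skewShift (ω : ℝ) (x : ℝ × ℝ) : ℝ × ℝ := (x.1 + x.2, x.2 + ω)

/-- The `n`-th iterate (`n ∈ ℤ`) of the skew-shift:
`S_ω^n(x₁,x₂) = (x₁ + n·x₂ + n(n−1)/2·ω, x₂ + n·ω)`. -/
def skewIterZ (ω : ℝ) (x : ℝ × ℝ) (n : ℤ) : ℝ × ℝ :=
  (x.1 + (n : ℝ) * x.2 + ((n * (n - 1) / 2 : ℤ) : ℝ) * ω, x.2 + (n : ℝ) * ω)

/-- The multi-frequency shift `T_ω x = x + ω`. -/
def mShift (ω : ℝ × ℝ) (x : ℝ × ℝ) : ℝ × ℝ := x + ω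

/-- The operator norm of a `2 × 2` real matrix. -/
def matNorm (M : Matrix (Fin 2) (Fin 2) ℝ) : ℝ :=
  ‖LinearMap.toContinuousLinearMap M.mulVecLin‖

/-- The one-step Schrödinger cocycle. -/
def cocycle (v : ℝ × ℝ → ℝ) (lam E : ℝ) (x : ℝ × ℝ) : Matrix (Fin 2) (Fin 2) ℝ :=
  !![lam * v x - E, -1; 1, 0]

/-- The transfer matrix `M_N(x,λ,E) = A(T^N x) ⋯ A(T x)`. -/
def transfer (T : ℝ × ℝ → ℝ × ℝ) (v : ℝ × ℝ → ℝ) (lam E : ℝ) (x : ℝ × ℝ) :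
    ℕ → Matrix (Fin 2) (Fin 2) ℝ
  | 0 => 1
  | N + 1 => cocycle v lam E (T^[N + 1] x) * transfer T v lam E x N

/-- `(1/N)·log‖M_N(x,λ,E)‖`. -/
def logAvg (T : ℝ × ℝ → ℝ × ℝ) (v : ℝ × ℝ → ℝ) (lam E : ℝ) (N : ℕ) (x : ℝ × ℝ) : ℝ :=
  (1 / (N : ℝ)) * Real.log (matNorm (transfer T v lam E x N))

/-- `L_N(λ,E) = ∫_{𝕋²} (1/N)·log‖M_N(x,λ,E)‖ dx`. -/
def LN (T : ℝ × ℝ → ℝ × ℝ) (v : ℝ × ℝ → ℝ) (lam E : ℝ) (N : ℕ) : ℝ :=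
  ∫ x in unitSquare, logAvg T v lam E N x

/-- The scaling factor `S(λ) = log(2|λ|B + 4)`. -/
def scalingS (B lam : ℝ) : ℝ := Real.log (2 * |lam| * B + 4)

/-- Fourier coefficients of a (`1`-periodic) function on `𝕋²`. -/
def fourierCoef (v : ℝ × ℝ → ℝ) (l : ℤ × ℤ) : ℂ :=
  ∫ x in unitSquare, (v x : ℂ) *
    Complex.exp (((-(2 * Real.pi * ((l.1 : ℝ) * x.1 + (l.2 : ℝ) * x.2)) : ℝ) : ℂ) * Complex.I)

/-- Lattice points `l ∈ ℤ²` with `|l| = |l₁| + |l₂| ≤ n`. -/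
def box (n : ℕ) : Finset (ℤ × ℤ) :=
  (Finset.Icc (-(n : ℤ), -(n : ℤ)) ((n : ℤ), (n : ℤ))).filter
    fun l => l.1.natAbs + l.2.natAbs ≤ n

/-- Entire extension of the truncation of the Fourier series of `v` to degree `n`. -/
def truncExt (v : ℝ × ℝ → ℝ) (n : ℕ) (z : ℂ × ℂ) : ℂ :=
  ∑ l ∈ box n, fourierCoef v l *
    Complex.exp (2 * Real.pi * Complex.I * ((l.1 : ℂ) * z.1 + (l.2 : ℂ) * z.2))


section LojHelpers
open Set
open scoped ContDiff

namespace Loj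

lemma expand_mono {g : ℝ → ℝ} (hgd : Differentiable ℝ g) {a b δ : ℝ}
    (hbd : ∀ t ∈ Icc a b, δ ≤ deriv g t) :
    ∀ s ∈ Icc a b, ∀ t ∈ Icc a b, s ≤ t → δ * (t - s) ≤ g t - g s := by
  intro s hs t ht hst
  have hmono : MonotoneOn (fun x => g x - δ * x) (Icc a b) := by
    apply monotoneOn_of_deriv_nonneg (convex_Icc a b)
    · exact (hgd.continuous.sub (continuous_const.mul continuous_id)).continuousOn
    · exact (hgd.sub ((differentiable_id.const_mul δ))).differentiableOn
    · intro x hx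
      have hx' : x ∈ Icc a b := interior_subset hx
      have : deriv (fun x => g x - δ * x) x = deriv g x - δ := by
        rw [deriv_fun_sub (hgd x) (by fun_prop)]
        congr 1
        simpa using deriv_const_mul δ (differentiable_id (𝕜 := ℝ) x)
      rw [this]
      linarith [hbd x hx']
  have := hmono hs ht hst
  simp only at this
  linarith

lemma expand_abs {g : ℝ → ℝ} (hgd : Differentiable ℝ g) (hgc : Continuous (deriv g))
    {a b δ : ℝ} (hδ : 0 < δ) (hbd : ∀ t ∈ Icc a b, δ ≤ |deriv g t|) :
    ∀ s ∈ Icc a b, ∀ t ∈ Icc a b, δ * |t - s| ≤ |g t - g s| := by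
  -- sign constancy
  have hsign : (∀ t ∈ Icc a b, δ ≤ deriv g t) ∨ (∀ t ∈ Icc a b, δ ≤ -deriv g t) := by
    by_contra hcon
    push_neg at hcon
    obtain ⟨⟨t1, ht1, ht1'⟩, ⟨t2, ht2, ht2'⟩⟩ := hcon
    have h1 : deriv g t1 ≤ -δ := by
      rcases abs_cases (deriv g t1) with ⟨h, _⟩ | ⟨h, _⟩
      · linarith [hbd t1 ht1]
      · linarith [hbd t1 ht1]
    have h2 : δ ≤ deriv g t2 := by
      rcases abs_cases (deriv g t2) with ⟨h, _⟩ | ⟨h, _⟩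
      · linarith [hbd t2 ht2]
      · linarith [hbd t2 ht2]
    have hzero : (0:ℝ) ∈ Set.uIcc (deriv g t1) (deriv g t2) := by
      rw [Set.mem_uIcc]
      left; constructor <;> linarith
    have := intermediate_value_uIcc (f := deriv g) (a := t1) (b := t2) hgc.continuousOn
    obtain ⟨c, hc, hc0⟩ := this hzero
    have hcmem : c ∈ Icc a b := by
      have : Set.uIcc t1 t2 ⊆ Icc a b := (Set.ordConnected_Icc).uIcc_subset ht1 ht2
      exact this hc
    have := hbd c hcmem
    rw [hc0] at this
    simp at this
    linarith
  have main : ∀ (h : ℝ → ℝ), Differentiable ℝ h → (∀ t ∈ Icc a b, δ ≤ deriv h t) →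
      ∀ s ∈ Icc a b, ∀ t ∈ Icc a b, δ * |t - s| ≤ |h t - h s| := by
    intro h hd hb s hs t ht
    rcases le_total s t with hst | hst
    · have := expand_mono hd hb s hs t ht hst
      have h1 : |t - s| = t - s := abs_of_nonneg (by linarith)
      have h2 : δ * (t-s) ≤ |h t - h s| := le_trans this (le_abs_self _)
      rw [h1]; exact h2
    · have := expand_mono hd hb t ht s hs hst
      have h1 : |t - s| = s - t := by rw [abs_sub_comm]; exact abs_of_nonneg (by linarith)
      have h2 : δ * (s-t) ≤ |h t - h s| := by
        rw [abs_sub_comm]; exact le_trans this (le_abs_self _)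
      rw [h1]; exact h2
  rcases hsign with hpos | hneg
  · exact main g hgd hpos
  · intro s hs t ht
    have hder : ∀ x, deriv (fun y => -g y) x = -deriv g x := fun x => deriv.neg
    have := main (fun y => -g y) hgd.neg (fun t' ht' => by rw [hder]; exact hneg t' ht') s hs t ht
    try simp only at this
    have habs : |-g t - -g s| = |g t - g s| := by
      have : -g t - -g s = -(g t - g s) := by ring
      rw [this, abs_neg]
    rwa [habs] at this


lemma one_le_inf : (1 : WithTop ℕ∞) ≤ ∞ := by exact_mod_cast le_top

lemma smooth_iteratedDeriv {f : ℝ → ℝ} (hf : ContDiff ℝ ∞ f) (n : ℕ) :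
    ContDiff ℝ ∞ (iteratedDeriv n f) := by
  rw [iteratedDeriv_eq_iterate]
  exact hf.iterate_deriv n

lemma expand_abs_iter {f : ℝ → ℝ} (hf : ContDiff ℝ ∞ f) (n : ℕ) {a b δ : ℝ} (hδ : 0 < δ)
    (hbd : ∀ t ∈ Icc a b, δ ≤ |iteratedDeriv (n+1) f t|) :
    ∀ s ∈ Icc a b, ∀ t ∈ Icc a b, δ * |t - s| ≤ |iteratedDeriv n f t - iteratedDeriv n f s| := by
  have hg := smooth_iteratedDeriv hf n
  have hgd : Differentiable ℝ (iteratedDeriv n f) := hg.differentiable (by simp)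
  have hdc : Continuous (deriv (iteratedDeriv n f)) := by
    rw [← iteratedDeriv_succ]
    exact (smooth_iteratedDeriv hf (n+1)).continuous
  rw [iteratedDeriv_succ] at hbd
  exact expand_abs hgd hdc hδ hbd

lemma oneD (k : ℕ) : ∃ c : ℝ, 0 < c ∧ ∀ f : ℝ → ℝ, ContDiff ℝ ∞ f →
    ∀ a b δ : ℝ, 0 < δ → (∀ t ∈ Icc a b, δ ≤ |iteratedDeriv (k+1) f t|) →
    ∀ ε : ℝ, 0 < ε →
    volume {t ∈ Icc a b | |f t| < ε} ≤ ENNReal.ofReal (c * (ε/δ) ^ (((k:ℝ)+1)⁻¹)) := by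
  induction k with
  | zero =>
    refine ⟨4, by norm_num, fun f hf a b δ hδ hbd ε hε => ?_⟩
    have hexp : ((((0:ℕ)):ℝ)+1)⁻¹ = (1:ℝ) := by norm_num
    rw [hexp, Real.rpow_one]
    set S := {t ∈ Icc a b | |f t| < ε} with hS
    rcases Set.eq_empty_or_nonempty S with hemp | ⟨s0, hs0⟩
    · rw [hemp]; simp
    · have hkey := expand_abs_iter hf 0 hδ hbd
      simp only [iteratedDeriv_zero] at hkey
      have hsub : S ⊆ Icc (s0 - 2*(ε/δ)) (s0 + 2*(ε/δ)) := by
        intro t ht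
        have h1 := hkey s0 hs0.1 t ht.1
        have h2 : |f t - f s0| < 2*ε := by
          calc |f t - f s0| ≤ |f t| + |f s0| := abs_sub _ _
          _ < 2*ε := by linarith [ht.2, hs0.2]
        have h3 : |t - s0| ≤ 2*(ε/δ) := by
          rw [← mul_div_assoc, le_div_iff₀ hδ]
          nlinarith [abs_nonneg (t - s0)]
        rw [abs_sub_le_iff] at h3
        constructor <;> linarith [h3.1, h3.2]
      calc volume S ≤ volume (Icc (s0 - 2*(ε/δ)) (s0 + 2*(ε/δ))) := measure_mono hsub
      _ = ENNReal.ofReal (4 * (ε/δ)) := by rw [Real.volume_Icc]; ring_nf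
  | succ n IH =>
    obtain ⟨c, hc, IH⟩ := IH
    refine ⟨4 + 2*c, by linarith, fun f hf a b δ hδ hbd ε hε => ?_⟩
    set θ : ℝ := ((n:ℝ)+2)⁻¹ with hθ
    have hθeq : (((n:ℕ)+1:ℕ):ℝ) + 1 = (n:ℝ)+2 := by push_cast; ring
    have hn2 : (0:ℝ) < (n:ℝ)+2 := by positivity
    have hn1 : (0:ℝ) < (n:ℝ)+1 := by positivity
    set x : ℝ := ε/δ with hx
    have hxpos : 0 < x := div_pos hε hδ
    set η : ℝ := δ * x ^ θ with hη
    have hηpos : 0 < η := by positivity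
    -- key rpow identity
    have hrpow : (ε/η) ^ (((n:ℝ)+1)⁻¹) = x ^ θ := by
      have h1 : ε/η = x ^ ((1:ℝ) - θ) := by
        rw [Real.rpow_sub hxpos, Real.rpow_one, hη, hx]
        field_simp
      rw [h1, ← Real.rpow_mul hxpos.le]
      congr 1
      rw [hθ]
      field_simp
      ring
    have hmono2 := expand_abs_iter hf (n+1) hδ hbd
    set T := {t ∈ Icc a b | |iteratedDeriv (n+1) f t| < η} with hT
    -- target exponent rewrite
    have hgoalexp : ((((n+1):ℕ):ℝ)+1)⁻¹ = θ := by rw [hθ]; push_cast; ring_nf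
    rw [hgoalexp]
    rcases Set.eq_empty_or_nonempty T with hemp | ⟨p, hp⟩
    · -- no small points of the derivative: apply IH directly with δ := η
      have hbd' : ∀ t ∈ Icc a b, η ≤ |iteratedDeriv (n+1) f t| := by
        intro t ht
        by_contra hcon
        have hmem : t ∈ T := ⟨ht, by linarith⟩
        rw [hemp] at hmem
        exact Set.notMem_empty t hmem
      calc volume {t ∈ Icc a b | |f t| < ε} ≤ ENNReal.ofReal (c * (ε/η) ^ (((n:ℝ)+1)⁻¹)) :=
            IH f hf a b η hηpos hbd' ε hε
      _ ≤ ENNReal.ofReal ((4 + 2*c) * x ^ θ) := by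
            rw [hrpow]
            apply ENNReal.ofReal_le_ofReal
            have : (0:ℝ) ≤ x ^ θ := Real.rpow_nonneg hxpos.le θ
            nlinarith
    · set d : ℝ := 2 * x ^ θ with hd
      have hdpos : 0 < d := by positivity
      have hdd : 2 * (η/δ) = d := by rw [hη, hd]; field_simp
      have hptight : ∀ t ∈ T, |t - p| < d := by
        intro t ht
        have h1 := hmono2 p hp.1 t ht.1
        have h2 : |iteratedDeriv (n+1) f t - iteratedDeriv (n+1) f p| < 2*η := by
          calc _ ≤ |iteratedDeriv (n+1) f t| + |iteratedDeriv (n+1) f p| := abs_sub _ _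
          _ < 2*η := by linarith [ht.2, hp.2]
        have h3 : δ * |t - p| < 2*η := lt_of_le_of_lt h1 h2
        have h4 : |t - p| < 2*η/δ := by rw [lt_div_iff₀ hδ]; nlinarith
        calc |t - p| < 2*η/δ := h4
        _ = d := by rw [← hdd]; ring
      set bL : ℝ := min b (p - d) with hbL
      set aR : ℝ := max a (p + d) with haR
      have hsplit : {t ∈ Icc a b | |f t| < ε} ⊆ Icc (p-d) (p+d) ∪
          ({t ∈ Icc a bL | |f t| < ε} ∪ {t ∈ Icc aR b | |f t| < ε}) := by
        rintro t ⟨htab, htf⟩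
        rcases le_or_gt (|t - p|) d with h | h
        · left
          rw [abs_sub_le_iff] at h
          exact ⟨by linarith [h.2], by linarith [h.1]⟩
        · right
          rw [lt_abs] at h
          rcases h with h | h
          · refine Or.inr ⟨⟨max_le htab.1 (by linarith), htab.2⟩, htf⟩
          · refine Or.inl ⟨⟨htab.1, le_min htab.2 (by linarith)⟩, htf⟩
      have hbdL : ∀ t ∈ Icc a bL, η ≤ |iteratedDeriv (n+1) f t| := by
        intro t ht
        have htab : t ∈ Icc a b := ⟨ht.1, le_trans ht.2 (min_le_left _ _)⟩
        by_contra hcon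
        push_neg at hcon
        have hT' : t ∈ T := ⟨htab, hcon⟩
        have h5 := hptight t hT'
        have h2 : t ≤ p - d := le_trans ht.2 (min_le_right _ _)
        rw [abs_sub_lt_iff] at h5
        linarith [h5.2]
      have hbdR : ∀ t ∈ Icc aR b, η ≤ |iteratedDeriv (n+1) f t| := by
        intro t ht
        have htab : t ∈ Icc a b := ⟨le_trans (le_max_left _ _) ht.1, ht.2⟩
        by_contra hcon
        push_neg at hcon
        have hT' : t ∈ T := ⟨htab, hcon⟩
        have h5 := hptight t hT'
        have h2 : p + d ≤ t := le_trans (le_max_right _ _) ht.1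
        rw [abs_sub_lt_iff] at h5
        linarith [h5.1]
      have hL := IH f hf a bL η hηpos hbdL ε hε
      have hR := IH f hf aR b η hηpos hbdR ε hε
      rw [hrpow] at hL hR
      have hxθ : (0:ℝ) ≤ x ^ θ := Real.rpow_nonneg hxpos.le θ
      calc volume {t ∈ Icc a b | |f t| < ε}
          ≤ volume (Icc (p-d) (p+d) ∪
            ({t ∈ Icc a bL | |f t| < ε} ∪ {t ∈ Icc aR b | |f t| < ε})) := measure_mono hsplit
        _ ≤ volume (Icc (p-d) (p+d)) +
            (volume {t ∈ Icc a bL | |f t| < ε} + volume {t ∈ Icc aR b | |f t| < ε}) :=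
            le_trans (measure_union_le _ _) (by gcongr; exact measure_union_le _ _)
        _ ≤ ENNReal.ofReal (2*d) + (ENNReal.ofReal (c * x ^ θ) + ENNReal.ofReal (c * x ^ θ)) := by
            gcongr
            rw [Real.volume_Icc]
            apply ENNReal.ofReal_le_ofReal
            ring_nf
            linarith
        _ = ENNReal.ofReal (2*d + (c * x ^ θ + c * x ^ θ)) := by
            rw [← ENNReal.ofReal_add (by positivity) (by positivity),
              ← ENNReal.ofReal_add (by positivity) (by positivity)]
        _ = ENNReal.ofReal ((4 + 2*c) * x ^ θ) := by
            congr 1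
            rw [hd]
            ring


lemma oneD_convex (k : ℕ) : ∃ c : ℝ, 0 < c ∧ ∀ f : ℝ → ℝ, ContDiff ℝ ∞ f →
    ∀ A : Set ℝ, Convex ℝ A →
    ∀ δ : ℝ, 0 < δ → (∀ t ∈ A, δ ≤ |iteratedDeriv (k+1) f t|) →
    ∀ ε : ℝ, 0 < ε →
    volume {t ∈ A | |f t| < ε} ≤ ENNReal.ofReal (c * (ε/δ) ^ (((k:ℝ)+1)⁻¹)) := by
  obtain ⟨c, hc, hcore⟩ := oneD k
  refine ⟨c, hc, fun f hf A hA δ hδ hbd ε hε => ?_⟩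
  set M := ENNReal.ofReal (c * (ε/δ) ^ (((k:ℝ)+1)⁻¹)) with hM
  set u := {t ∈ A | |f t| < ε} with hu
  -- the bound region is closed
  have hclosed : IsClosed {x : ℝ | δ ≤ |iteratedDeriv (k+1) f x|} :=
    isClosed_le continuous_const ((smooth_iteratedDeriv hf (k+1)).continuous.abs)
  have hclA : ∀ x ∈ closure A, δ ≤ |iteratedDeriv (k+1) f x| := by
    intro x hx
    exact (hclosed.closure_subset_iff.2 (fun y hy => hbd y hy)) hx
  have hn : ∀ n : ℕ, volume (u ∩ Icc (-(n:ℝ)) (n:ℝ)) ≤ M := by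
    intro n
    set S := u ∩ Icc (-(n:ℝ)) (n:ℝ) with hSdef
    rcases Set.eq_empty_or_nonempty S with hemp | hne
    · rw [hemp]; simp
    have hbdd : BddBelow S ∧ BddAbove S := by
      constructor
      · exact (bddBelow_Icc).mono (inter_subset_right)
      · exact (bddAbove_Icc).mono (inter_subset_right)
    set a := sInf S with ha
    set b := sSup S with hb
    have hSab : S ⊆ Icc a b := fun t ht => ⟨csInf_le hbdd.1 ht, le_csSup hbdd.2 ht⟩
    have hacl : a ∈ closure S := csInf_mem_closure hne hbdd.1
    have hbcl : b ∈ closure S := csSup_mem_closure hne hbdd.2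
    have hScl : closure S ⊆ closure A :=
      closure_mono (fun t ht => (ht.1 : t ∈ u).1)
    have hbd' : ∀ t ∈ Icc a b, δ ≤ |iteratedDeriv (k+1) f t| := by
      intro t ht
      rcases eq_or_lt_of_le ht.1 with rfl | hat
      · exact hclA _ (hScl hacl)
      rcases eq_or_lt_of_le ht.2 with rfl | htb
      · exact hclA _ (hScl hbcl)
      -- t ∈ Ioo a b : strictly between, use convexity
      obtain ⟨s1, hs1S, hs1⟩ := exists_lt_of_csInf_lt hne hat
      obtain ⟨s2, hs2S, hs2⟩ := exists_lt_of_lt_csSup hne htb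
      have hs1A : s1 ∈ A := (hs1S.1 : s1 ∈ u).1
      have hs2A : s2 ∈ A := (hs2S.1 : s2 ∈ u).1
      have : t ∈ A := hA.ordConnected.out hs1A hs2A ⟨hs1.le, hs2.le⟩
      exact hbd t this
    have hsub : S ⊆ {t ∈ Icc a b | |f t| < ε} := fun t ht => ⟨hSab ht, (ht.1 : t ∈ u).2⟩
    exact le_trans (measure_mono hsub) (hcore f hf a b δ hδ hbd' ε hε)
  have hcover : u = ⋃ n : ℕ, (u ∩ Icc (-(n:ℝ)) (n:ℝ)) := by
    ext t
    simp only [Set.mem_iUnion, Set.mem_inter_iff, Set.mem_Icc]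
    constructor
    · intro ht
      obtain ⟨n, hn'⟩ := exists_nat_ge |t|
      exact ⟨n, ht, by rw [abs_le] at hn'; exact hn'.1, by rw [abs_le] at hn'; exact hn'.2⟩
    · rintro ⟨n, ht, _⟩; exact ht
  rw [hcover]
  have hdir : Directed (· ⊆ ·) (fun n : ℕ => u ∩ Icc (-(n:ℝ)) (n:ℝ)) := by
    apply Monotone.directed_le
    intro m n hmn
    apply inter_subset_inter_right
    apply Icc_subset_Icc (by exact_mod_cast neg_le_neg (Nat.cast_le.2 hmn)) (by exact_mod_cast hmn)
  rw [hdir.measure_iUnion]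
  exact iSup_le hn


noncomputable def pd (u : ℝ × ℝ) (w : ℝ × ℝ → ℝ) : ℝ × ℝ → ℝ := fun x => fderiv ℝ w x u

lemma pd_contDiff {w : ℝ × ℝ → ℝ} (hw : ContDiff ℝ ∞ w) (u : ℝ × ℝ) :
    ContDiff ℝ ∞ (pd u w) :=
  (hw.fderiv_right (m := ∞) (by simp)).clm_apply contDiff_const

lemma pd_iter_contDiff {w : ℝ × ℝ → ℝ} (hw : ContDiff ℝ ∞ w) (u : ℝ × ℝ) (j : ℕ) :
    ContDiff ℝ ∞ ((pd u)^[j] w) := by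
  induction j generalizing w with
  | zero => exact hw
  | succ m IH =>
    rw [Function.iterate_succ_apply]
    exact IH (pd_contDiff hw u)

lemma pd_hasFDerivAt {w : ℝ × ℝ → ℝ} (hw : ContDiff ℝ ∞ w) (u : ℝ × ℝ) (x : ℝ × ℝ) :
    HasFDerivAt (pd u w)
      ((ContinuousLinearMap.apply ℝ ℝ u).comp (fderiv ℝ (fderiv ℝ w) x)) x := by
  have h2 : HasFDerivAt (fderiv ℝ w) (fderiv ℝ (fderiv ℝ w) x) x :=
    (((hw.fderiv_right (m := ∞) (by simp)).differentiable (by simp)) x).hasFDerivAt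
  exact ((ContinuousLinearMap.apply ℝ ℝ u).hasFDerivAt).comp x h2

lemma pd_comm {w : ℝ × ℝ → ℝ} (hw : ContDiff ℝ ∞ w) (u u' : ℝ × ℝ) :
    pd u (pd u' w) = pd u' (pd u w) := by
  funext x
  have hd : ∀ y, HasFDerivAt w (fderiv ℝ w y) y :=
    fun y => ((hw.differentiable (by simp)) y).hasFDerivAt
  have h2 : HasFDerivAt (fderiv ℝ w) (fderiv ℝ (fderiv ℝ w) x) x :=
    (((hw.fderiv_right (m := ∞) (by simp)).differentiable (by simp)) x).hasFDerivAt
  have hsym := second_derivative_symmetric hd h2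
  have e1 : pd u (pd u' w) x = fderiv ℝ (fderiv ℝ w) x u u' := by
    have := (pd_hasFDerivAt hw u' x).fderiv
    show fderiv ℝ (pd u' w) x u = _
    rw [this]
    rfl
  have e2 : pd u' (pd u w) x = fderiv ℝ (fderiv ℝ w) x u' u := by
    have := (pd_hasFDerivAt hw u x).fderiv
    show fderiv ℝ (pd u w) x u' = _
    rw [this]
    rfl
  rw [e1, e2, hsym u u']

lemma pd_comm_iter {w : ℝ × ℝ → ℝ} (hw : ContDiff ℝ ∞ w) (u u' : ℝ × ℝ) (j : ℕ) :
    pd u' ((pd u)^[j] w) = (pd u)^[j] (pd u' w) := by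
  induction j generalizing w with
  | zero => rfl
  | succ m IH =>
    rw [Function.iterate_succ_apply, Function.iterate_succ_apply,
      IH (pd_contDiff hw u), pd_comm hw u u']

def bb1 : ℝ × ℝ := (1, 0)
def bb2 : ℝ × ℝ := (0, 1)

lemma fderiv_apply_decomp {w : ℝ × ℝ → ℝ} (hw : ContDiff ℝ ∞ w) (x e : ℝ × ℝ) :
    fderiv ℝ w x e = e.1 * pd bb1 w x + e.2 * pd bb2 w x := by
  have he : e = e.1 • bb1 + e.2 • bb2 := by
    simp [bb1, bb2, Prod.ext_iff]
  conv_lhs => rw [he]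
  rw [map_add, (fderiv ℝ w x).map_smul, (fderiv ℝ w x).map_smul]
  simp [pd, smul_eq_mul]

lemma line_hasDerivAt {G : ℝ × ℝ → ℝ} (hG : Differentiable ℝ G) (p e : ℝ × ℝ) (t0 : ℝ) :
    HasDerivAt (fun t : ℝ => G (p + t • e)) (fderiv ℝ G (p + t0 • e) e) t0 := by
  have hline : HasDerivAt (fun t : ℝ => p + t • e) e t0 := by
    have h1 : HasDerivAt (fun t : ℝ => t • e) ((1:ℝ) • e) t0 := (hasDerivAt_id t0).smul_const e
    rw [one_smul] at h1
    exact h1.const_add p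
  exact (hG (p + t0 • e)).hasFDerivAt.comp_hasDerivAt t0 hline

lemma lineDeriv_eq {w : ℝ × ℝ → ℝ} (hw : ContDiff ℝ ∞ w) (p e : ℝ × ℝ) (k : ℕ) :
    ∀ t0 : ℝ, iteratedDeriv k (fun t => w (p + t • e)) t0 =
      ∑ j ∈ Finset.range (k+1), (k.choose j : ℝ) * (e.1 ^ j * e.2 ^ (k - j)) *
        ((pd bb1)^[j] ((pd bb2)^[k - j] w)) (p + t0 • e) := by
  induction k with
  | zero =>
    intro t0
    simp [iteratedDeriv_zero]
  | succ n IH =>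
    intro t0
    rw [iteratedDeriv_succ]
    have hfun : iteratedDeriv n (fun t => w (p + t • e)) = fun t =>
        ∑ j ∈ Finset.range (n+1), (n.choose j : ℝ) * (e.1 ^ j * e.2 ^ (n - j)) *
          ((pd bb1)^[j] ((pd bb2)^[n - j] w)) (p + t • e) := funext IH
    rw [hfun]
    -- derivative of the sum
    have hD : HasDerivAt (fun t => ∑ j ∈ Finset.range (n+1),
        (n.choose j : ℝ) * (e.1 ^ j * e.2 ^ (n - j)) *
          ((pd bb1)^[j] ((pd bb2)^[n - j] w)) (p + t • e))
        (∑ j ∈ Finset.range (n+1), (n.choose j : ℝ) * (e.1 ^ j * e.2 ^ (n - j)) *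
          (fderiv ℝ ((pd bb1)^[j] ((pd bb2)^[n - j] w)) (p + t0 • e) e)) t0 := by
      apply HasDerivAt.fun_sum
      intro j hj
      have hsm : ContDiff ℝ ∞ ((pd bb1)^[j] ((pd bb2)^[n - j] w)) :=
        pd_iter_contDiff (pd_iter_contDiff hw bb2 (n-j)) bb1 j
      exact (line_hasDerivAt (hsm.differentiable (by simp)) p e t0).const_mul _
    rw [hD.deriv]
    -- now pure algebra on the sums
    set x := p + t0 • e with hxdef
    have hterm : ∀ j ∈ Finset.range (n+1),
        (n.choose j : ℝ) * (e.1 ^ j * e.2 ^ (n - j)) *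
          (fderiv ℝ ((pd bb1)^[j] ((pd bb2)^[n - j] w)) x e) =
        (n.choose j : ℝ) * (e.1 ^ (j+1) * e.2 ^ ((n+1) - (j+1)) *
            ((pd bb1)^[j+1] ((pd bb2)^[(n+1)-(j+1)] w)) x) +
        (n.choose j : ℝ) * (e.1 ^ j * e.2 ^ ((n+1) - j) *
            ((pd bb1)^[j] ((pd bb2)^[(n+1)-j] w)) x) := by
      intro j hj
      rw [Finset.mem_range] at hj
      have hjn : j ≤ n := Nat.lt_succ_iff.1 hj
      have hsm0 : ContDiff ℝ ∞ ((pd bb2)^[n - j] w) := pd_iter_contDiff hw bb2 (n-j)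
      have hsm : ContDiff ℝ ∞ ((pd bb1)^[j] ((pd bb2)^[n - j] w)) :=
        pd_iter_contDiff hsm0 bb1 j
      rw [fderiv_apply_decomp hsm]
      have h1 : pd bb1 ((pd bb1)^[j] ((pd bb2)^[n - j] w)) =
          (pd bb1)^[j+1] ((pd bb2)^[(n+1)-(j+1)] w) := by
        rw [Nat.succ_sub_succ, ← Function.iterate_succ_apply' (pd bb1)]
      have h2 : pd bb2 ((pd bb1)^[j] ((pd bb2)^[n - j] w)) =
          (pd bb1)^[j] ((pd bb2)^[(n+1)-j] w) := by
        rw [pd_comm_iter hsm0 bb1 bb2 j]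
        congr 1
        rw [← Function.iterate_succ_apply' (pd bb2)]
        have : (n+1) - j = (n-j) + 1 := by omega
        rw [this]
      rw [h1, h2]
      have hexp : (n+1) - (j+1) = n - j := Nat.succ_sub_succ n j
      have hexp2 : (n+1) - j = (n - j) + 1 := by omega
      rw [hexp, hexp2, pow_succ]
      ring
    rw [Finset.sum_congr rfl hterm, Finset.sum_add_distrib]
    -- ξ i = e1^i e2^(n+1-i) A_i
    set ξ : ℕ → ℝ := fun i => e.1 ^ i * e.2 ^ ((n+1) - i) *
        ((pd bb1)^[i] ((pd bb2)^[(n+1)-i] w)) x with hξ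
    have hL1 : ∑ j ∈ Finset.range (n+1), (n.choose j : ℝ) *
        (e.1 ^ (j+1) * e.2 ^ ((n+1) - (j+1)) * ((pd bb1)^[j+1] ((pd bb2)^[(n+1)-(j+1)] w)) x)
        = ∑ j ∈ Finset.range (n+1), (n.choose j : ℝ) * ξ (j+1) := rfl
    have hL2 : ∑ j ∈ Finset.range (n+1), (n.choose j : ℝ) *
        (e.1 ^ j * e.2 ^ ((n+1) - j) * ((pd bb1)^[j] ((pd bb2)^[(n+1)-j] w)) x)
        = ∑ j ∈ Finset.range (n+1), (n.choose j : ℝ) * ξ j := rfl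
    rw [hL1, hL2]
    -- RHS
    have hRHS : ∑ j ∈ Finset.range (n+2), ((n+1).choose j : ℝ) *
        (e.1 ^ j * e.2 ^ ((n+1) - j)) * ((pd bb1)^[j] ((pd bb2)^[(n+1)-j] w)) x
        = ∑ j ∈ Finset.range (n+2), ((n+1).choose j : ℝ) * ξ j := by
      apply Finset.sum_congr rfl
      intro j hj
      rw [hξ]
      ring
    rw [hRHS]
    rw [Finset.sum_range_succ' (fun j => ((n+1).choose j : ℝ) * ξ j) (n+1)]
    have hch : ∀ j, (((n+1).choose (j+1) : ℕ) : ℝ) = (n.choose j : ℝ) + (n.choose (j+1) : ℝ) := by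
      intro j
      rw [Nat.choose_succ_succ']
      push_cast
      ring
    have hsplit : ∑ j ∈ Finset.range (n+1), ((n+1).choose (j+1) : ℝ) * ξ (j+1)
        = ∑ j ∈ Finset.range (n+1), (n.choose j : ℝ) * ξ (j+1)
          + ∑ j ∈ Finset.range (n+1), (n.choose (j+1) : ℝ) * ξ (j+1) := by
      rw [← Finset.sum_add_distrib]
      apply Finset.sum_congr rfl
      intro j hj
      rw [hch j]
      ring
    rw [hsplit]
    have hsecond : ∑ j ∈ Finset.range (n+1), (n.choose j : ℝ) * ξ j
        = ∑ j ∈ Finset.range (n+1), (n.choose (j+1) : ℝ) * ξ (j+1) + ((n+1).choose 0 : ℝ) * ξ 0 := by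
      rw [Finset.sum_range_succ' (fun j => (n.choose j : ℝ) * ξ j) n]
      have : ∑ j ∈ Finset.range (n+1), (n.choose (j+1) : ℝ) * ξ (j+1)
          = ∑ j ∈ Finset.range n, (n.choose (j+1) : ℝ) * ξ (j+1) := by
        rw [Finset.sum_range_succ]
        simp [Nat.choose_succ_self]
      rw [this]
      simp
    rw [hsecond]
    ring


lemma inner_slice {v : ℝ × ℝ → ℝ} (hv : ContDiff ℝ ∞ v) (m2 : ℕ) (t x2 : ℝ) :
    iteratedDeriv m2 (fun u => v (t, u)) x2 = (pd bb2)^[m2] v (t, x2) := by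
  have hfun : (fun u => v (t, u)) = fun u => v (((t:ℝ), (0:ℝ)) + u • bb2) := by
    funext u
    congr 1
    simp [bb2, Prod.ext_iff]
  rw [hfun, lineDeriv_eq hv ((t:ℝ), (0:ℝ)) bb2 m2 x2]
  rw [Finset.sum_eq_single 0]
  · have hpt : ((t:ℝ), (0:ℝ)) + x2 • bb2 = (t, x2) := by simp [bb2, Prod.ext_iff]
    rw [hpt]
    simp [bb2]
  · intro j hj hj0
    have : bb2.1 ^ j = 0 := by simp [bb2, zero_pow hj0]
    rw [this]
    ring
  · intro h
    exact absurd (Finset.mem_range.2 (Nat.succ_pos m2)) h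

lemma pder_eq {v : ℝ × ℝ → ℝ} (hv : ContDiff ℝ ∞ v) (m : ℕ × ℕ) (x : ℝ × ℝ) :
    pder m v x = ((pd bb1)^[m.1] ((pd bb2)^[m.2] v)) x := by
  unfold pder
  have h1 : (fun t => iteratedDeriv m.2 (fun u => v (t,u)) x.2)
      = fun t => ((pd bb2)^[m.2] v) (((0:ℝ), x.2) + t • bb1) := by
    funext t
    rw [inner_slice hv m.2 t x.2]
    congr 1
    simp [bb1, Prod.ext_iff]
  rw [h1, lineDeriv_eq (pd_iter_contDiff hv bb2 m.2) ((0:ℝ), x.2) bb1 m.1 x.1]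
  rw [Finset.sum_eq_single m.1]
  · have hpt : ((0:ℝ), x.2) + x.1 • bb1 = x := by simp [bb1, Prod.ext_iff]
    rw [hpt]
    simp [bb1]
  · intro j hj hj0
    have hjm : j < m.1 := lt_of_le_of_ne (Nat.lt_succ_iff.1 (Finset.mem_range.1 hj)) hj0
    have : bb1.2 ^ (m.1 - j) = (0:ℝ) := zero_pow (by omega : m.1 - j ≠ 0)
    rw [this]
    ring
  · intro h
    exact absurd (Finset.mem_range.2 (Nat.lt_succ_self m.1)) h

noncomputable def gfun (v : ℝ × ℝ → ℝ) (a : ℝ) (k : ℕ) : ℝ × ℝ → ℝ :=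
  fun y => ∑ j ∈ Finset.range (k+1), (k.choose j : ℝ) * a ^ j *
    ((pd bb1)^[j] ((pd bb2)^[k-j] v)) y

lemma gfun_continuous {v : ℝ × ℝ → ℝ} (hv : ContDiff ℝ ∞ v) (a : ℝ) (k : ℕ) :
    Continuous (gfun v a k) := by
  apply continuous_finset_sum
  intro j hj
  exact continuous_const.mul (pd_iter_contDiff (pd_iter_contDiff hv bb2 (k-j)) bb1 j).continuous

lemma lineDeriv_gfun {v : ℝ × ℝ → ℝ} (hv : ContDiff ℝ ∞ v) (a : ℝ) (k : ℕ) (p : ℝ × ℝ) (t0 : ℝ) :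
    iteratedDeriv k (fun t => v (p + t • ((a:ℝ), (1:ℝ)))) t0 = gfun v a k (p + t0 • ((a:ℝ), (1:ℝ))) := by
  rw [lineDeriv_eq hv p ((a:ℝ),(1:ℝ)) k t0]
  unfold gfun
  apply Finset.sum_congr rfl
  intro j hj
  simp only [one_pow]
  ring

lemma exists_direction {v : ℝ × ℝ → ℝ} (hv : ContDiff ℝ ∞ v) (x0 : ℝ × ℝ) (m : ℕ × ℕ)
    (hne : pder m v x0 ≠ 0) : ∃ a : ℝ, gfun v a (m.1 + m.2) x0 ≠ 0 := by
  set k := m.1 + m.2 with hk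
  by_contra hcon
  push_neg at hcon
  set P : Polynomial ℝ := ∑ j ∈ Finset.range (k+1),
    Polynomial.monomial j ((k.choose j : ℝ) * ((pd bb1)^[j] ((pd bb2)^[k-j] v)) x0) with hP
  have heval : ∀ a : ℝ, P.eval a = gfun v a k x0 := by
    intro a
    rw [hP, Polynomial.eval_finset_sum]
    unfold gfun
    apply Finset.sum_congr rfl
    intro j hj
    rw [Polynomial.eval_monomial]
    ring
  have hP0 : P = 0 := by
    apply Polynomial.funext
    intro r
    rw [heval r, hcon r]
    simp
  have hcoeff : P.coeff m.1 = (k.choose m.1 : ℝ) * ((pd bb1)^[m.1] ((pd bb2)^[m.2] v)) x0 := by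
    rw [hP, Polynomial.finset_sum_coeff]
    rw [Finset.sum_eq_single m.1]
    · rw [Polynomial.coeff_monomial, if_pos rfl]
      have : k - m.1 = m.2 := by omega
      rw [this]
    · intro j hj hj0
      rw [Polynomial.coeff_monomial, if_neg hj0]
    · intro h
      exact absurd (Finset.mem_range.2 (by omega)) h
  rw [hP0] at hcoeff
  simp at hcoeff
  rcases hcoeff with h | h
  · exact absurd h (Nat.choose_pos (by omega : m.1 ≤ k)).ne'
  · rw [pder_eq hv m x0] at hne
    exact hne h


lemma shear_mp (a : ℝ) :
    MeasurePreserving (fun q : ℝ × ℝ => (q.1 + q.2 * a, q.2)) volume volume := by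
  have h1 : MeasurePreserving (fun q : ℝ × ℝ => (q.1, q.2 + q.1 * a))
      ((volume : Measure ℝ).prod (volume : Measure ℝ))
      ((volume : Measure ℝ).prod (volume : Measure ℝ)) := by
    have := MeasurePreserving.skew_product (f := (id : ℝ → ℝ))
      (g := fun x y => y + x * a) (μa := (volume : Measure ℝ)) (μb := volume)
      (μc := volume) (μd := volume) (MeasurePreserving.id _)
      (by fun_prop)
      (Filter.Eventually.of_forall (fun x => map_add_right_eq_self volume (x * a)))
    exact this
  have hswap : MeasurePreserving (Prod.swap : ℝ × ℝ → ℝ × ℝ)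
      ((volume : Measure ℝ).prod volume) ((volume : Measure ℝ).prod volume) :=
    Measure.measurePreserving_swap
  have hcomp := hswap.comp (h1.comp hswap)
  have hfun : (Prod.swap ∘ (fun q : ℝ × ℝ => (q.1, q.2 + q.1 * a)) ∘ Prod.swap)
      = fun q : ℝ × ℝ => (q.1 + q.2 * a, q.2) := by
    funext q
    simp [Prod.swap]
  rw [Measure.volume_eq_prod ℝ ℝ]
  rw [← hfun]
  exact hcomp

lemma ball_est {v : ℝ × ℝ → ℝ} (hv : ContDiff ℝ ∞ v) (a : ℝ) (k : ℕ) (hk : k ≠ 0)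
    (x0 : ℝ × ℝ) (r δ : ℝ) (hr : 0 < r) (hδ : 0 < δ)
    (hbd : ∀ y ∈ Metric.ball x0 r, δ ≤ |gfun v a k y|) :
    ∃ C : ℝ, 0 < C ∧ ∀ ε : ℝ, 0 < ε → ∀ E : ℝ,
      volume {x ∈ Metric.ball x0 r | |v x - E| < ε} ≤ ENNReal.ofReal (C * ε ^ ((k:ℝ)⁻¹)) := by
  obtain ⟨k', rfl⟩ : ∃ k', k = k' + 1 := ⟨k - 1, by omega⟩
  obtain ⟨c, hc, hcore⟩ := oneD_convex k'
  set R : ℝ := r + |x0.1| + |a| * (|x0.2| + r) with hR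
  have hRpos : 0 < R := by positivity
  set θ : ℝ := ((k':ℝ)+1)⁻¹ with hθ
  have hθpos : 0 < θ := by positivity
  have hθcast : (((k'+1:ℕ)):ℝ)⁻¹ = θ := by rw [hθ]; push_cast; ring_nf
  refine ⟨2*R * c / δ ^ θ, by positivity, fun ε hε E => ?_⟩
  set e : ℝ × ℝ := ((a:ℝ), (1:ℝ)) with he
  set ψ : ℝ × ℝ → ℝ × ℝ := fun q => (q.1 + q.2 * a, q.2) with hψ
  have hψmp := shear_mp a
  set O := {x ∈ Metric.ball x0 r | |v x - E| < ε} with hO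
  have hOopen : IsOpen O := by
    apply Metric.isOpen_ball.inter
    exact isOpen_lt (continuous_abs.comp (hv.continuous.sub continuous_const)) continuous_const
  have hpre : volume (ψ ⁻¹' O) = volume O :=
    hψmp.measure_preimage hOopen.measurableSet.nullMeasurableSet
  rw [← hpre]
  have hψcont : Continuous ψ := by fun_prop
  have hmeas : MeasurableSet (ψ ⁻¹' O) := (hOopen.preimage hψcont).measurableSet
  rw [Measure.volume_eq_prod ℝ ℝ]
  rw [Measure.prod_apply hmeas]
  have hψeq : ∀ s t : ℝ, ψ (s, t) = ((s:ℝ), (0:ℝ)) + t • e := by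
    intro s t
    simp only [hψ, he, Prod.ext_iff, Prod.fst_add, Prod.snd_add, Prod.smul_fst, Prod.smul_snd,
      smul_eq_mul]
    constructor <;> first | trivial | ring
  set M := ENNReal.ofReal (c * (ε/δ) ^ θ) with hM
  -- section bound
  have hsecbd : ∀ s : ℝ, volume {t : ℝ | ψ (s, t) ∈ O} ≤ M := by
    intro s
    set p : ℝ × ℝ := ((s:ℝ), (0:ℝ)) with hp
    set A : Set ℝ := {t : ℝ | p + t • e ∈ Metric.ball x0 r} with hA
    have hconv : Convex ℝ A := by
      intro t1 h1 t2 h2 μ ν hμ hν hμν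
      have hcomb : p + (μ • t1 + ν • t2) • e = μ • (p + t1 • e) + ν • (p + t2 • e) := by
        have h' : μ • p + ν • p = (μ + ν) • p := (add_smul μ ν p).symm
        rw [smul_add, smul_add, add_add_add_comm, h', hμν, one_smul]
        congr 1
        rw [smul_smul, smul_smul, ← add_smul]
        congr 1
      show p + (μ • t1 + ν • t2) • e ∈ Metric.ball x0 r
      rw [hcomb]
      exact (convex_ball x0 r) h1 h2 hμ hν hμν
    set fs : ℝ → ℝ := fun t => v (p + t • e) - E with hfs
    have hline : ContDiff ℝ ∞ (fun t : ℝ => p + t • e) :=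
      contDiff_const.add (contDiff_id.smul contDiff_const)
    have hfssm : ContDiff ℝ ∞ fs := (hv.comp hline).sub contDiff_const
    have hder0 : deriv fs = deriv (fun t => v (p + t • e)) := by
      funext t
      rw [hfs]
      exact deriv_sub_const E
    have hconstder : iteratedDeriv (k'+1) fs = iteratedDeriv (k'+1) (fun t => v (p + t • e)) := by
      rw [iteratedDeriv_succ', iteratedDeriv_succ', hder0]
    have hbd' : ∀ t ∈ A, δ ≤ |iteratedDeriv (k'+1) fs t| := by
      intro t ht
      rw [hconstder]
      have h2 := lineDeriv_gfun hv a (k'+1) p t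
      rw [← he] at h2
      rw [h2]
      exact hbd _ ht
    have hsub : {t : ℝ | ψ (s, t) ∈ O} ⊆ {t ∈ A | |fs t| < ε} := by
      intro t ht
      have hmem : ψ (s, t) ∈ O := ht
      rw [hψeq s t] at hmem
      exact ⟨hmem.1, hmem.2⟩
    calc volume {t : ℝ | ψ (s, t) ∈ O} ≤ volume {t ∈ A | |fs t| < ε} := measure_mono hsub
    _ ≤ M := hcore fs hfssm A hconv δ hδ hbd' ε hε
  -- support bound
  have hsupp : ∀ s : ℝ, s ∉ Icc (-R) R → {t : ℝ | ψ (s, t) ∈ O} = ∅ := by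
    intro s hs
    rw [Set.eq_empty_iff_forall_notMem]
    intro t ht
    apply hs
    have hball : ψ (s, t) ∈ Metric.ball x0 r := (ht : ψ (s,t) ∈ O).1
    rw [Metric.mem_ball] at hball
    have hd1 : |s + t * a - x0.1| < r := by
      have h1 : dist (s + t * a) x0.1 ≤ dist (ψ (s,t)) x0 := by
        rw [Prod.dist_eq]
        exact le_max_left _ _
      rw [Real.dist_eq] at h1
      exact lt_of_le_of_lt h1 hball
    have hd2 : |t - x0.2| < r := by
      have h1 : dist t x0.2 ≤ dist (ψ (s,t)) x0 := by
        rw [Prod.dist_eq]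
        exact le_max_right _ _
      rw [Real.dist_eq] at h1
      exact lt_of_le_of_lt h1 hball
    have ht1 : |t| ≤ |x0.2| + r := by
      have h2 : |t| ≤ |t - x0.2| + |x0.2| := by
        have := abs_add_le (t - x0.2) x0.2
        simpa using this
      linarith
    have hs1 : |s| ≤ |s + t * a - x0.1| + |x0.1| + |a| * |t| := by
      have h2 : s = (s + t * a - x0.1) + (x0.1 - t * a) := by ring
      calc |s| = |(s + t * a - x0.1) + (x0.1 - t * a)| := by rw [← h2]
      _ ≤ |s + t * a - x0.1| + |x0.1 - t * a| := abs_add_le _ _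
      _ ≤ |s + t * a - x0.1| + (|x0.1| + |t * a|) := by linarith [abs_sub x0.1 (t*a)]
      _ = |s + t * a - x0.1| + |x0.1| + |a| * |t| := by rw [abs_mul]; ring
    have hs2 : |a| * |t| ≤ |a| * (|x0.2| + r) :=
      mul_le_mul_of_nonneg_left ht1 (abs_nonneg a)
    have : |s| ≤ R := by rw [hR]; linarith
    exact abs_le.1 this
  -- integrate
  calc ∫⁻ s : ℝ, volume (Prod.mk s ⁻¹' (ψ ⁻¹' O))
      ≤ ∫⁻ s : ℝ, (Icc (-R) R).indicator (fun _ => M) s := by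
        apply lintegral_mono
        intro s
        beta_reduce
        by_cases hsmem : s ∈ Icc (-R) R
        · rw [Set.indicator_of_mem hsmem]
          exact hsecbd s
        · rw [Set.indicator_of_notMem hsmem]
          have : (Prod.mk s ⁻¹' (ψ ⁻¹' O)) = ({t : ℝ | ψ (s, t) ∈ O}) := rfl
          rw [this, hsupp s hsmem]
          simp
    _ = M * volume (Icc (-R) R) := by
        rw [lintegral_indicator measurableSet_Icc]
        simp [MeasureTheory.setLIntegral_const]
    _ ≤ ENNReal.ofReal ((2*R * c / δ ^ θ) * ε ^ ((((k'+1):ℕ)):ℝ)⁻¹) := by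
        rw [Real.volume_Icc, hM, hθcast]
        rw [← ENNReal.ofReal_mul (by positivity)]
        apply ENNReal.ofReal_le_ofReal
        rw [Real.div_rpow hε.le hδ.le]
        have h2R : R - -R = 2*R := by ring
        rw [h2R]
        apply le_of_eq
        field_simp


end Loj

end LojHelpers

open scoped ContDiff

open Loj in
/-- Łojasiewicz inequality for smooth transversal functions of two variables. -/
theorem lojasiewicz_inequality
    (v : ℝ × ℝ → ℝ) (hv : ContDiff ℝ (⊤ : ℕ∞) v)
    (htc : ∀ x ∈ Set.Icc (0 : ℝ × ℝ) 1, ∃ m : ℕ × ℕ, m.1 + m.2 ≠ 0 ∧ pder m v x ≠ 0) :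
    ∃ C b : ℝ, 0 < C ∧ 0 < b ∧
      ∀ ε : ℝ, 0 < ε → ∀ E : ℝ,
        volume {x ∈ Set.Icc (0 : ℝ × ℝ) 1 | |v x - E| < ε} ≤
          ENNReal.ofReal (C * ε ^ b) := by
  have hv' : ContDiff ℝ ∞ v := hv.of_le (by simp)
  set K : Set (ℝ × ℝ) := Set.Icc 0 1 with hK
  -- per-point data
  have hpoint : ∀ x0 : K, ∃ r : ℝ, 0 < r ∧ ∃ C : ℝ, 0 < C ∧ ∃ b' : ℝ,
      0 < b' ∧ b' ≤ 1 ∧ ∀ ε : ℝ, 0 < ε → ∀ E : ℝ,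
      volume {x ∈ Metric.ball (x0 : ℝ × ℝ) r | |v x - E| < ε} ≤ ENNReal.ofReal (C * ε ^ b') := by
    rintro ⟨x0, hx0⟩
    obtain ⟨m, hm, hmne⟩ := htc x0 hx0
    obtain ⟨a, ha⟩ := exists_direction hv' x0 m hmne
    set k := m.1 + m.2 with hk
    set δ : ℝ := |gfun v a k x0| / 2 with hδdef
    have hδ : 0 < δ := by
      have : 0 < |gfun v a k x0| := abs_pos.2 ha
      linarith
    have hUopen : IsOpen {y : ℝ × ℝ | δ < |gfun v a k y|} :=
      isOpen_lt continuous_const (gfun_continuous hv' a k).abs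
    have hx0U : x0 ∈ {y : ℝ × ℝ | δ < |gfun v a k y|} := by
      show δ < |gfun v a k x0|
      rw [hδdef]
      linarith [abs_pos.2 ha]
    obtain ⟨r, hr, hrsub⟩ := Metric.isOpen_iff.1 hUopen x0 hx0U
    have hbd : ∀ y ∈ Metric.ball x0 r, δ ≤ |gfun v a k y| :=
      fun y hy => le_of_lt (hrsub hy)
    obtain ⟨C, hC, hball⟩ := ball_est hv' a k hm x0 r δ hr hδ hbd
    refine ⟨r, hr, C, hC, (k:ℝ)⁻¹, ?_, ?_, hball⟩
    · have : (0:ℝ) < k := by exact_mod_cast Nat.pos_of_ne_zero hm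
      positivity
    · have h1 : (1:ℝ) ≤ (k:ℝ) := by exact_mod_cast Nat.one_le_iff_ne_zero.2 hm
      rw [inv_le_one_iff₀]
      right; exact h1
  choose r hr C hC b' hb1 hb2 hbound using hpoint
  -- compactness
  have hKcpt : IsCompact K := isCompact_Icc
  have hcover : K ⊆ ⋃ i : K, Metric.ball (i : ℝ × ℝ) (r i) := by
    intro x hx
    exact Set.mem_iUnion.2 ⟨⟨x, hx⟩, Metric.mem_ball_self (hr ⟨x, hx⟩)⟩
  obtain ⟨t, ht⟩ := hKcpt.elim_finite_subcover _ (fun i => Metric.isOpen_ball) hcover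
  have hKne : (0 : ℝ × ℝ) ∈ K := by
    constructor
    · exact le_refl _
    · exact ⟨zero_le_one, zero_le_one⟩
  have htne : t.Nonempty := by
    have := ht hKne
    rw [Set.mem_iUnion₂] at this
    obtain ⟨i, hi, _⟩ := this
    exact ⟨i, hi⟩
  set b : ℝ := t.inf' htne b' with hb
  have hbpos : 0 < b := by
    rw [hb, Finset.lt_inf'_iff]
    exact fun i _ => hb1 i
  have hble : ∀ i ∈ t, b ≤ b' i := fun i hi => Finset.inf'_le b' hi
  set Ctot : ℝ := (∑ i ∈ t, C i) + 1 with hCtot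
  have hCsum : 0 ≤ ∑ i ∈ t, C i := Finset.sum_nonneg (fun i _ => (hC i).le)
  have hCtot1 : 1 ≤ Ctot := by rw [hCtot]; linarith
  refine ⟨Ctot, b, by linarith, hbpos, ?_⟩
  intro ε hε E
  rcases le_or_gt ε 1 with hε1 | hε1
  · -- small ε
    have hsub : {x ∈ K | |v x - E| < ε} ⊆
        ⋃ i ∈ t, {x ∈ Metric.ball (i : ℝ × ℝ) (r i) | |v x - E| < ε} := by
      rintro x ⟨hxK, hxv⟩
      have := ht hxK
      rw [Set.mem_iUnion₂] at this
      obtain ⟨i, hi, hxi⟩ := this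
      exact Set.mem_iUnion₂.2 ⟨i, hi, hxi, hxv⟩
    calc volume {x ∈ K | |v x - E| < ε}
        ≤ volume (⋃ i ∈ t, {x ∈ Metric.ball (i : ℝ × ℝ) (r i) | |v x - E| < ε}) :=
          measure_mono hsub
      _ ≤ ∑ i ∈ t, volume {x ∈ Metric.ball (i : ℝ × ℝ) (r i) | |v x - E| < ε} :=
          measure_biUnion_finset_le t _
      _ ≤ ∑ i ∈ t, ENNReal.ofReal (C i * ε ^ b) := by
          apply Finset.sum_le_sum
          intro i hi
          refine le_trans (hbound i ε hε E) (ENNReal.ofReal_le_ofReal ?_)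
          have h1 : ε ^ (b' i) ≤ ε ^ b :=
            Real.rpow_le_rpow_of_exponent_ge hε hε1 (hble i hi)
          exact mul_le_mul_of_nonneg_left h1 (hC i).le
      _ = ENNReal.ofReal (∑ i ∈ t, C i * ε ^ b) := by
          rw [ENNReal.ofReal_sum_of_nonneg]
          intro i hi
          exact mul_nonneg (hC i).le (Real.rpow_nonneg hε.le b)
      _ ≤ ENNReal.ofReal (Ctot * ε ^ b) := by
          apply ENNReal.ofReal_le_ofReal
          rw [← Finset.sum_mul]
          have hεb : (0:ℝ) ≤ ε ^ b := Real.rpow_nonneg hε.le b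
          have : (∑ i ∈ t, C i) ≤ Ctot := by rw [hCtot]; linarith
          exact mul_le_mul_of_nonneg_right this hεb
  · -- large ε
    have h1 : volume {x ∈ K | |v x - E| < ε} ≤ volume K := measure_mono (fun x hx => hx.1)
    have hKvol : volume K = 1 := by
      rw [hK, Set.Icc_prod_eq, Measure.volume_eq_prod ℝ ℝ, Measure.prod_prod]
      simp [Real.volume_Icc]
    have h2 : (1:ℝ) ≤ ε ^ b := by
      calc (1:ℝ) = 1 ^ b := (Real.one_rpow b).symm
      _ ≤ ε ^ b := Real.rpow_le_rpow zero_le_one hε1.le hbpos.le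
    have h3 : (1:ℝ) ≤ Ctot * ε ^ b := by nlinarith
    calc volume {x ∈ K | |v x - E| < ε} ≤ 1 := h1.trans (le_of_eq hKvol)
    _ ≤ ENNReal.ofReal (Ctot * ε ^ b) := by
        rw [← ENNReal.ofReal_one]
        exact ENNReal.ofReal_le_ofReal h3
end
end

section
/- (Quantitative implicit function theorem.) Let f be a C¹ function on a rectangle R = I × J ⊂ [0,1]², with J = [c, d]. Let A := max_{x ∈ R} |∂_{x₁} f(x)| and assume A > 0 and ε₀ := min_{x ∈ R} |∂_{x₂} f(x)| > 0. Suppose f(a₁, a₂) = 0 for some point (a₁, a₂) ∈ R. Then there is an absolute constant c₀ > 0 such that, with κ := c₀·ε₀·A^{−1}·min{a₂ − c, d − a₂} and I₀ := (a₁ − κ, a₁ + κ) ∩ I, there exists a C¹ function φ₀ on I₀ satisfying: (i) f(x₁, φ₀(x₁)) = 0 for all x₁ ∈ I₀; (ii) |φ₀′(x₁)| ≤ A·ε₀^{−1} for all x₁ ∈ I₀; (iii) if x₁ ∈ I₀, x₂ ∈ J and f(x₁, x₂) = 0 then x₂ = φ₀(x₁). -/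
open MeasureTheory Filter Topology

noncomputable section

private def Pa (f : ℝ × ℝ → ℝ) (z : ℝ × ℝ) : ℝ := fderiv ℝ f z (1, 0)
private def Pb (f : ℝ × ℝ → ℝ) (z : ℝ × ℝ) : ℝ := fderiv ℝ f z (0, 1)

private lemma pder10 (f : ℝ × ℝ → ℝ) (z : ℝ × ℝ) :
    pder (1, 0) f z = deriv (fun t => f (t, z.2)) z.1 := by
  simp [pder, iteratedDeriv_one, iteratedDeriv_zero]

private lemma pder01 (f : ℝ × ℝ → ℝ) (z : ℝ × ℝ) :
    pder (0, 1) f z = deriv (fun u => f (z.1, u)) z.2 := by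
  simp [pder, iteratedDeriv_one, iteratedDeriv_zero]

private lemma pder10_neg (f : ℝ × ℝ → ℝ) (z : ℝ × ℝ) :
    pder (1, 0) (fun w => -f w) z = -pder (1, 0) f z := by
  rw [pder10, pder10]; exact deriv.neg

private lemma pder01_neg (f : ℝ × ℝ → ℝ) (z : ℝ × ℝ) :
    pder (0, 1) (fun w => -f w) z = -pder (0, 1) f z := by
  rw [pder01, pder01]; exact deriv.neg

private lemma slice1 {f : ℝ × ℝ → ℝ} (hf : Differentiable ℝ f) (z : ℝ × ℝ) :
    HasDerivAt (fun t => f (t, z.2)) (Pa f z) z.1 := by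
  have h1 : HasDerivAt (fun t : ℝ => (t, z.2)) ((1 : ℝ), (0 : ℝ)) z.1 :=
    (hasDerivAt_id _).prodMk (hasDerivAt_const _ _)
  have h2 : HasFDerivAt f (fderiv ℝ f z) z := (hf z).hasFDerivAt
  have h3 : HasFDerivAt f (fderiv ℝ f z) ((fun t : ℝ => (t, z.2)) z.1) := by
    simpa using h2
  simpa [Pa, Function.comp_def] using h3.comp_hasDerivAt z.1 h1

private lemma slice2 {f : ℝ × ℝ → ℝ} (hf : Differentiable ℝ f) (z : ℝ × ℝ) :
    HasDerivAt (fun u => f (z.1, u)) (Pb f z) z.2 := by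
  have h1 : HasDerivAt (fun u : ℝ => (z.1, u)) ((0 : ℝ), (1 : ℝ)) z.2 :=
    (hasDerivAt_const _ _).prodMk (hasDerivAt_id _)
  have h2 : HasFDerivAt f (fderiv ℝ f z) z := (hf z).hasFDerivAt
  have h3 : HasFDerivAt f (fderiv ℝ f z) ((fun u : ℝ => (z.1, u)) z.2) := by
    simpa using h2
  simpa [Pb, Function.comp_def] using h3.comp_hasDerivAt z.2 h1

private lemma pder10' {f : ℝ × ℝ → ℝ} (hf : Differentiable ℝ f) (z : ℝ × ℝ) :
    pder (1, 0) f z = Pa f z := by rw [pder10]; exact (slice1 hf z).deriv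

private lemma pder01' {f : ℝ × ℝ → ℝ} (hf : Differentiable ℝ f) (z : ℝ × ℝ) :
    pder (0, 1) f z = Pb f z := by rw [pder01]; exact (slice2 hf z).deriv

private lemma fderiv_lin (f : ℝ × ℝ → ℝ) (z v : ℝ × ℝ) :
    fderiv ℝ f z v = v.1 * Pa f z + v.2 * Pb f z := by
  have hv : v = v.1 • ((1:ℝ), (0:ℝ)) + v.2 • ((0:ℝ), (1:ℝ)) := by
    ext <;> simp
  conv_lhs => rw [hv]
  rw [map_add, _root_.map_smul, _root_.map_smul]
  simp [Pa, Pb, smul_eq_mul]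

private lemma contPa {f : ℝ × ℝ → ℝ} (hf : ContDiff ℝ 1 f) : Continuous (Pa f) :=
  (hf.continuous_fderiv one_ne_zero).clm_apply continuous_const

private lemma contPb {f : ℝ × ℝ → ℝ} (hf : ContDiff ℝ 1 f) : Continuous (Pb f) :=
  (hf.continuous_fderiv one_ne_zero).clm_apply continuous_const

private lemma local_ift {f : ℝ × ℝ → ℝ} (hf : ContDiff ℝ 1 f) (z₀ : ℝ × ℝ)
    (hz : f z₀ = 0) (hpb : Pb f z₀ ≠ 0) :
    ∃ ψ : ℝ → ℝ, ContDiffAt ℝ 1 ψ z₀.1 ∧ ψ z₀.1 = z₀.2 ∧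
      (∀ᶠ x in 𝓝 z₀.1, f (x, ψ x) = 0) ∧
      HasDerivAt ψ (-(Pa f z₀) / Pb f z₀) z₀.1 := by
  have hdiff : Differentiable ℝ f := hf.differentiable one_ne_zero
  set L : (ℝ × ℝ) →L[ℝ] (ℝ × ℝ) :=
    (ContinuousLinearMap.fst ℝ ℝ ℝ).prod (fderiv ℝ f z₀) with hL
  set M : (ℝ × ℝ) →L[ℝ] (ℝ × ℝ) :=
    (ContinuousLinearMap.fst ℝ ℝ ℝ).prod
      ((Pb f z₀)⁻¹ • (ContinuousLinearMap.snd ℝ ℝ ℝ - (Pa f z₀) • ContinuousLinearMap.fst ℝ ℝ ℝ))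
      with hM
  have hML : Function.LeftInverse M L := by
    intro v
    apply Prod.ext
    · simp [hM, hL]
    · simp only [hM, hL, ContinuousLinearMap.prod_apply, ContinuousLinearMap.coe_fst',
        ContinuousLinearMap.smul_apply, ContinuousLinearMap.sub_apply,
        ContinuousLinearMap.coe_snd', fderiv_lin]
      field_simp [hpb]
      linear_combination v.2 * mul_inv_cancel₀ hpb
  have hLM : Function.RightInverse M L := by
    intro w
    apply Prod.ext
    · simp [hM, hL]
    · simp only [hM, hL, ContinuousLinearMap.prod_apply, ContinuousLinearMap.coe_fst',
        ContinuousLinearMap.smul_apply, ContinuousLinearMap.sub_apply,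
        ContinuousLinearMap.coe_snd', fderiv_lin]
      field_simp [hpb]
      linear_combination (w.2 - w.1 * Pa f z₀) * mul_inv_cancel₀ hpb
  set e : (ℝ × ℝ) ≃L[ℝ] (ℝ × ℝ) := ContinuousLinearEquiv.equivOfInverse L M hML hLM with he
  set F : ℝ × ℝ → ℝ × ℝ := fun z => (z.1, f z) with hF
  have hFc : ContDiff ℝ 1 F := contDiff_fst.prodMk hf
  have hcoe : (e : (ℝ × ℝ) →L[ℝ] (ℝ × ℝ)) = L := by
    ext <;> rfl
  have hFd : HasFDerivAt F (e : (ℝ × ℝ) →L[ℝ] (ℝ × ℝ)) z₀ := by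
    rw [hcoe]
    exact (hasFDerivAt_fst).prodMk (hdiff z₀).hasFDerivAt
  have hstrict : HasStrictFDerivAt F (e : (ℝ × ℝ) →L[ℝ] (ℝ × ℝ)) z₀ :=
    hFc.contDiffAt.hasStrictFDerivAt' hFd one_ne_zero
  set G : ℝ × ℝ → ℝ × ℝ := hstrict.localInverse F e z₀ with hG
  have hGc : ContDiffAt ℝ 1 G (F z₀) := hFc.contDiffAt.to_localInverse hFd one_ne_zero
  have hFz₀ : F z₀ = (z₀.1, 0) := by simp [hF, hz]
  set ψ : ℝ → ℝ := fun x => (G (x, 0)).2 with hψ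
  have hGc' : ContDiffAt ℝ 1 G (z₀.1, (0:ℝ)) := by rwa [hFz₀] at hGc
  have hinner : ContDiffAt ℝ 1 (fun x : ℝ => (x, (0:ℝ))) z₀.1 :=
    (contDiff_id.prodMk contDiff_const).contDiffAt
  have hψc : ContDiffAt ℝ 1 ψ z₀.1 :=
    ((contDiffAt_snd.comp _ hGc').comp z₀.1 hinner :)
  have hGFz : G (z₀.1, 0) = z₀ := by
    have := hstrict.localInverse_apply_image
    rwa [hFz₀] at this
  have hψz : ψ z₀.1 = z₀.2 := by rw [hψ]; simp [hGFz]
  have hmain : ∀ᶠ x in 𝓝 z₀.1, f (x, ψ x) = 0 := by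
    have h2 := hstrict.eventually_right_inverse
    rw [hFz₀] at h2
    have h3 : Tendsto (fun x : ℝ => (x, (0:ℝ))) (𝓝 z₀.1) (𝓝 (z₀.1, (0:ℝ))) :=
      ((continuous_id.prodMk continuous_const).tendsto z₀.1)
    filter_upwards [h3.eventually h2] with x hx
    have h5 : (G (x, 0)).1 = x := congrArg Prod.fst hx
    have h6 : f (G (x, 0)) = 0 := congrArg Prod.snd hx
    have h7 : G (x, 0) = (x, ψ x) := Prod.ext h5 rfl
    rw [← h7]; exact h6
  have hψd : HasDerivAt ψ (deriv ψ z₀.1) z₀.1 := (hψc.differentiableAt one_ne_zero).hasDerivAt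
  have hchain : HasDerivAt (fun x => f (x, ψ x)) (Pa f z₀ + deriv ψ z₀.1 * Pb f z₀) z₀.1 := by
    have hi : HasDerivAt (fun x : ℝ => (x, ψ x)) ((1 : ℝ), deriv ψ z₀.1) z₀.1 :=
      (hasDerivAt_id _).prodMk hψd
    have ho : HasFDerivAt f (fderiv ℝ f z₀) ((fun x : ℝ => (x, ψ x)) z₀.1) := by
      have : ((fun x : ℝ => (x, ψ x)) z₀.1) = z₀ := by
        simp only [hψz]
      rw [this]
      exact (hdiff z₀).hasFDerivAt
    have := ho.comp_hasDerivAt z₀.1 hi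
    simpa [fderiv_lin, Function.comp_def] using this
  have hzero : HasDerivAt (fun x => f (x, ψ x)) 0 z₀.1 :=
    (hasDerivAt_const z₀.1 (0:ℝ)).congr_of_eventuallyEq (by filter_upwards [hmain] with x hx; exact hx)
  have hval : Pa f z₀ + deriv ψ z₀.1 * Pb f z₀ = 0 := hchain.unique hzero
  have hde : deriv ψ z₀.1 = -(Pa f z₀) / Pb f z₀ := by
    field_simp
    linarith
  exact ⟨ψ, hψc, hψz, hmain, hde ▸ hψd⟩

private lemma key (f : ℝ × ℝ → ℝ) (hf : ContDiff ℝ 1 f)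
    (p q c d : ℝ)
    (A : ℝ) (hA : 0 < A)
    (hAbd : ∀ x ∈ Set.Icc p q ×ˢ Set.Icc c d, |pder (1, 0) f x| ≤ A)
    (ε0 : ℝ) (hε0 : 0 < ε0)
    (hpos : ∀ x ∈ Set.Icc p q ×ˢ Set.Icc c d, ε0 ≤ pder (0, 1) f x)
    (a₁ a₂ : ℝ) (ha : (a₁, a₂) ∈ Set.Icc p q ×ˢ Set.Icc c d)
    (hfa : f (a₁, a₂) = 0)
    (κ : ℝ) (hκ : κ = 1/2 * ε0 * A⁻¹ * min (a₂ - c) (d - a₂)) :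
    ∃ φ : ℝ → ℝ, ContDiff ℝ 1 φ ∧
      (∀ x₁ ∈ Set.Ioo (a₁ - κ) (a₁ + κ) ∩ Set.Icc p q, f (x₁, φ x₁) = 0) ∧
      (∀ x₁ ∈ Set.Ioo (a₁ - κ) (a₁ + κ) ∩ Set.Icc p q, |deriv φ x₁| ≤ A * ε0⁻¹) ∧
      (∀ x₁ ∈ Set.Ioo (a₁ - κ) (a₁ + κ) ∩ Set.Icc p q, ∀ x₂ ∈ Set.Icc c d,
        f (x₁, x₂) = 0 → x₂ = φ x₁) := by
  classical
  have ha1 : a₁ ∈ Set.Icc p q := ha.1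
  have ha2 : a₂ ∈ Set.Icc c d := ha.2
  set δ : ℝ := min (a₂ - c) (d - a₂) with hδ
  have hδc : δ ≤ a₂ - c := min_le_left _ _
  have hδd : δ ≤ d - a₂ := min_le_right _ _
  have hδ0 : 0 ≤ δ := le_min (by linarith [ha2.1]) (by linarith [ha2.2])
  rcases eq_or_lt_of_le hδ0 with hδz | hδpos
  · have hκ0 : κ = 0 := by rw [hκ, ← hδz, mul_zero]
    have hempty : Set.Ioo (a₁ - κ) (a₁ + κ) ∩ Set.Icc p q = ∅ := by
      rw [hκ0]; simp
    refine ⟨fun _ => a₂, contDiff_const, ?_, ?_, ?_⟩ <;> intro x₁ hx₁ <;>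
      (rw [hempty] at hx₁; exact absurd hx₁ (Set.notMem_empty _))
  · have hAne : A ≠ 0 := ne_of_gt hA
    have hκval : κ = ε0 * δ / (2 * A) := by rw [hκ]; field_simp
    have hκpos : 0 < κ := by rw [hκval]; positivity
    have hAκ : A * κ = ε0 * δ / 2 := by rw [hκval]; field_simp
    set α : ℝ := max (a₁ - κ) p with hα
    set β : ℝ := min (a₁ + κ) q with hβ
    have ha₁K : α ≤ a₁ ∧ a₁ ≤ β :=
      ⟨max_le (by linarith) ha1.1, le_min (by linarith) ha1.2⟩
    have hαβ : α ≤ β := le_trans ha₁K.1 ha₁K.2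
    set K : Set ℝ := Set.Icc α β with hK
    have hKpq : K ⊆ Set.Icc p q := fun x hx =>
      ⟨le_trans (le_max_right _ _) hx.1, le_trans hx.2 (min_le_right _ _)⟩
    have hKκ : ∀ x ∈ K, |x - a₁| ≤ κ := by
      intro x hx
      rw [abs_le]
      have h1 : a₁ - κ ≤ x := le_trans (le_max_left _ _) hx.1
      have h2 : x ≤ a₁ + κ := le_trans hx.2 (min_le_left _ _)
      constructor <;> linarith
    have hdiff : Differentiable ℝ f := hf.differentiable one_ne_zero
    have hfc : Continuous f := hf.continuous
    have hPabd : ∀ z ∈ Set.Icc p q ×ˢ Set.Icc c d, |Pa f z| ≤ A := fun z hz => by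
      rw [← pder10' hdiff]; exact hAbd z hz
    have hPbbd : ∀ z ∈ Set.Icc p q ×ˢ Set.Icc c d, ε0 ≤ Pb f z := fun z hz => by
      rw [← pder01' hdiff]; exact hpos z hz
    -- monotonicity and uniqueness
    have hmono : ∀ x ∈ Set.Icc p q, StrictMonoOn (fun u => f (x, u)) (Set.Icc c d) := by
      intro x hx
      apply strictMonoOn_of_deriv_pos (convex_Icc c d)
      · exact (hfc.comp (continuous_const.prodMk continuous_id)).continuousOn
      · intro u hu
        rw [interior_Icc] at hu
        rw [(slice2 hdiff (x, u)).deriv]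
        exact lt_of_lt_of_le hε0 (hPbbd (x, u) ⟨hx, Set.Ioo_subset_Icc_self hu⟩)
    have huniq : ∀ x ∈ Set.Icc p q, ∀ u ∈ Set.Icc c d, ∀ v ∈ Set.Icc c d,
        f (x, u) = 0 → f (x, v) = 0 → u = v := fun x hx u hu v hv h1 h2 =>
      (hmono x hx).injOn hu hv (by simp only [h1, h2])
    -- existence of zeros
    have hδcd : Set.Icc (a₂ - δ) (a₂ + δ) ⊆ Set.Icc c d := fun u hu =>
      ⟨by linarith [hu.1], by linarith [hu.2]⟩
    have hmem1 : a₂ - δ ∈ Set.Icc c d := ⟨by linarith, by linarith [ha2.2]⟩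
    have hmem2 : a₂ + δ ∈ Set.Icc c d := ⟨by linarith [ha2.1], by linarith⟩
    have hExist : ∀ x ∈ K, ∃ u, u ∈ Set.Ioo (a₂ - δ) (a₂ + δ) ∧ f (x, u) = 0 := by
      intro x hxK
      have hxpq := hKpq hxK
      have hxa : |x - a₁| ≤ κ := hKκ x hxK
      have hfx : |f (x, a₂)| ≤ ε0 * δ / 2 := by
        have hmvt : ‖f (x, a₂) - f (a₁, a₂)‖ ≤ A * ‖x - a₁‖ := by
          apply Convex.norm_image_sub_le_of_norm_hasDerivWithin_le
            (f' := fun t => Pa f (t, a₂))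
            (fun t ht => (slice1 hdiff (t, a₂)).hasDerivWithinAt)
            (fun t ht => by rw [Real.norm_eq_abs]; exact hPabd (t, a₂) ⟨ht, ha2⟩)
            (convex_Icc p q) ha1 hxpq
        rw [hfa, sub_zero, Real.norm_eq_abs, Real.norm_eq_abs] at hmvt
        calc |f (x, a₂)| ≤ A * |x - a₁| := hmvt
          _ ≤ A * κ := mul_le_mul_of_nonneg_left hxa hA.le
          _ = ε0 * δ / 2 := hAκ
      have hgap : ∀ u v : ℝ, u ∈ Set.Icc c d → v ∈ Set.Icc c d → u ≤ v →
          f (x, u) + ε0 * (v - u) ≤ f (x, v) := by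
        intro u v hu hv huv
        have hder : ∀ w : ℝ, HasDerivAt (fun u => f (x, u) - ε0 * u) (Pb f (x, w) - ε0) w := by
          intro w
          have h1 := slice2 hdiff (x, w)
          have h2 : HasDerivAt (fun u : ℝ => ε0 * u) ε0 w := by
            simpa using (hasDerivAt_id w).const_mul ε0
          simpa [Pi.sub_def] using h1.sub h2
        have hmono2 : MonotoneOn (fun u => f (x, u) - ε0 * u) (Set.Icc c d) := by
          apply monotoneOn_of_deriv_nonneg (convex_Icc c d)
          · exact ((hfc.comp (continuous_const.prodMk continuous_id)).sub
              (continuous_const.mul continuous_id)).continuousOn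
          · exact fun w _ => (hder w).differentiableAt.differentiableWithinAt
          · intro w hw
            rw [interior_Icc] at hw
            rw [(hder w).deriv]
            have := hPbbd (x, w) ⟨hxpq, Set.Ioo_subset_Icc_self hw⟩
            linarith
        have := hmono2 hu hv huv
        simp only at this
        nlinarith
      have hε0δ : 0 < ε0 * δ := mul_pos hε0 hδpos
      have habs := abs_le.mp hfx
      have hlow : f (x, a₂ - δ) < 0 := by
        have h := hgap (a₂ - δ) a₂ hmem1 ha2 (by linarith)
        have h2 : ε0 * (a₂ - (a₂ - δ)) = ε0 * δ := by ring_nf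
        rw [h2] at h
        linarith [habs.2]
      have hhigh : 0 < f (x, a₂ + δ) := by
        have h := hgap a₂ (a₂ + δ) ha2 hmem2 (by linarith)
        have h2 : ε0 * (a₂ + δ - a₂) = ε0 * δ := by ring_nf
        rw [h2] at h
        linarith [habs.1]
      have hivt := intermediate_value_Icc (by linarith : a₂ - δ ≤ a₂ + δ)
        ((hfc.comp (continuous_const.prodMk continuous_id)).continuousOn :
          ContinuousOn (fun u => f (x, u)) (Set.Icc (a₂ - δ) (a₂ + δ)))
      obtain ⟨u, hu, hfu⟩ := hivt ⟨hlow.le, hhigh.le⟩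
      refine ⟨u, ⟨lt_of_le_of_ne hu.1 ?_, lt_of_le_of_ne hu.2 ?_⟩, hfu⟩
      · intro h; rw [← h] at hfu; exact hlow.ne hfu
      · intro h; rw [h] at hfu; exact hhigh.ne' hfu
    set φ : ℝ → ℝ := fun x =>
      if h : ∃ u, u ∈ Set.Ioo (a₂ - δ) (a₂ + δ) ∧ f (x, u) = 0 then h.choose else a₂ with hφdef
    have hφspec : ∀ x ∈ K, φ x ∈ Set.Ioo (a₂ - δ) (a₂ + δ) ∧ f (x, φ x) = 0 := by
      intro x hx
      have h := hExist x hx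
      simp only [hφdef, dif_pos h]
      exact h.choose_spec
    have hφmem : ∀ x ∈ K, φ x ∈ Set.Icc c d := fun x hx =>
      hδcd (Set.Ioo_subset_Icc_self (hφspec x hx).1)
    have hφIoo : ∀ x ∈ K, φ x ∈ Set.Ioo c d := fun x hx =>
      ⟨lt_of_le_of_lt (by linarith : c ≤ a₂ - δ) (hφspec x hx).1.1,
       lt_of_lt_of_le (hφspec x hx).1.2 (by linarith : a₂ + δ ≤ d)⟩
    have hKR : ∀ x ∈ K, (x, φ x) ∈ Set.Icc p q ×ˢ Set.Icc c d := fun x hx =>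
      ⟨hKpq hx, hφmem x hx⟩
    set g : ℝ → ℝ := fun x => -(Pa f (x, φ x)) / Pb f (x, φ x) with hg
    -- derivative of φ within K
    have hderivK : ∀ x₀ ∈ K, HasDerivWithinAt φ (g x₀) K x₀ := by
      intro x₀ hx₀
      have hz₀R := hKR x₀ hx₀
      have hpb : 0 < Pb f (x₀, φ x₀) := lt_of_lt_of_le hε0 (hPbbd _ hz₀R)
      obtain ⟨ψ, hψc, hψz, hmain, hψd⟩ := local_ift hf (x₀, φ x₀) (hφspec x₀ hx₀).2 hpb.ne'
      have hopen : ∀ᶠ x in 𝓝 x₀, ψ x ∈ Set.Ioo c d := by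
        have hmem : ψ x₀ ∈ Set.Ioo c d := by rw [hψz]; exact hφIoo x₀ hx₀
        exact hψc.continuousAt.eventually_mem (isOpen_Ioo.mem_nhds hmem)
      have heq : φ =ᶠ[𝓝[K] x₀] ψ := by
        have h8 : ∀ᶠ x in 𝓝[K] x₀, f (x, ψ x) = 0 ∧ ψ x ∈ Set.Ioo c d :=
          (hmain.and hopen).filter_mono nhdsWithin_le_nhds
        filter_upwards [h8, self_mem_nhdsWithin] with x hx hxK
        exact huniq x (hKpq hxK) (φ x) (hφmem x hxK) (ψ x)
          (Set.Ioo_subset_Icc_self hx.2) (hφspec x hxK).2 hx.1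
      exact hψd.hasDerivWithinAt.congr_of_eventuallyEq heq hψz.symm
    have hφcont : ContinuousOn φ K := fun x hx => (hderivK x hx).continuousWithinAt
    have hgcont : ContinuousOn g K := by
      have hxφ : ContinuousOn (fun x => (x, φ x)) K := continuousOn_id.prodMk hφcont
      apply ContinuousOn.div
      · exact ((contPa hf).comp_continuousOn hxφ).neg
      · exact (contPb hf).comp_continuousOn hxφ
      · exact fun x hx => (lt_of_lt_of_le hε0 (hPbbd _ (hKR x hx))).ne'
    -- projection onto K and global extension
    set pr : ℝ → ℝ := fun x => max α (min x β) with hpr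
    have hprK : ∀ x, pr x ∈ K := fun x =>
      ⟨le_max_left _ _, max_le hαβ (min_le_right _ _)⟩
    have hprid : ∀ x ∈ K, pr x = x := fun x hx => by
      simp only [hpr]; rw [min_eq_left hx.2, max_eq_right hx.1]
    have hprle : ∀ x, x ≤ α → pr x = α := by
      intro x hx
      simp only [hpr]; rw [min_eq_left (le_trans hx hαβ), max_eq_left hx]
    have hprge : ∀ x, β ≤ x → pr x = β := by
      intro x hx
      simp only [hpr]; rw [min_eq_right hx, max_eq_right hαβ]
    have hprc : Continuous pr := continuous_const.max (continuous_id.min continuous_const)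
    set Φ : ℝ → ℝ := fun x => φ (pr x) + g (pr x) * (x - pr x) with hΦ
    have hΦK : ∀ x ∈ K, Φ x = φ x := fun x hx => by
      simp only [hΦ]; rw [hprid x hx]; ring
    have hlin : ∀ (y₀ : ℝ) (x : ℝ), HasDerivAt (fun y => φ y₀ + g y₀ * (y - y₀)) (g y₀) x := by
      intro y₀ x
      simpa using (((hasDerivAt_id x).sub_const y₀).const_mul (g y₀)).const_add (φ y₀)
    have hΦd : ∀ x, HasDerivAt Φ (g (pr x)) x := by
      intro x
      rcases lt_or_ge x α with hxα | hxα
      · rw [hprle x hxα.le]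
        apply (hlin α x).congr_of_eventuallyEq
        filter_upwards [eventually_lt_nhds hxα] with y hy
        simp only [hΦ]; rw [hprle y hy.le]
      rcases lt_or_ge β x with hβx | hxβ
      · rw [hprge x hβx.le]
        apply (hlin β x).congr_of_eventuallyEq
        filter_upwards [eventually_gt_nhds hβx] with y hy
        simp only [hΦ]; rw [hprge y hy.le]
      have hxK : x ∈ K := ⟨hxα, hxβ⟩
      rw [hprid x hxK]
      have W2 : HasDerivWithinAt Φ (g x) K x :=
        (hderivK x hxK).congr (fun y hy => hΦK y hy) (hΦK x hxK)
      have W1 : HasDerivWithinAt Φ (g x) (Set.Iic α) x := by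
        rcases eq_or_lt_of_le hxα with heq | hlt
        · apply ((hlin α x).hasDerivWithinAt.congr
            (fun y hy => by simp only [hΦ]; rw [hprle y hy])
            (by simp only [hΦ]; rw [hprle x (le_of_eq heq.symm)])).congr_deriv
          rw [← heq]
        · exact HasFDerivWithinAt.of_notMem_closure (by simpa using hlt.not_ge)
      have W3 : HasDerivWithinAt Φ (g x) (Set.Ici β) x := by
        rcases eq_or_lt_of_le hxβ with heq | hlt
        · apply ((hlin β x).hasDerivWithinAt.congr
            (fun y hy => by simp only [hΦ]; rw [hprge y hy])
            (by simp only [hΦ]; rw [hprge x heq.ge])).congr_deriv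
          rw [heq]
        · exact HasFDerivWithinAt.of_notMem_closure (by simpa using hlt.not_ge)
      have hU : (Set.Iic α ∪ (Set.Icc α β ∪ Set.Ici β)) = Set.univ := by
        rw [Set.Icc_union_Ici_eq_Ici hαβ, Set.Iic_union_Ici]
      have := W1.union (W2.union W3)
      rw [hU, hasDerivWithinAt_univ] at this
      exact this
    have hΦdiff : Differentiable ℝ Φ := fun x => (hΦd x).differentiableAt
    have hΦderiv : deriv Φ = fun x => g (pr x) := funext fun x => (hΦd x).deriv
    have hΦc1 : ContDiff ℝ 1 Φ := by
      rw [contDiff_one_iff_deriv]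
      refine ⟨hΦdiff, ?_⟩
      rw [hΦderiv]
      exact hgcont.comp_continuous hprc hprK
    have hI₀K : Set.Ioo (a₁ - κ) (a₁ + κ) ∩ Set.Icc p q ⊆ K := fun x hx =>
      ⟨max_le hx.1.1.le hx.2.1, le_min hx.1.2.le hx.2.2⟩
    refine ⟨Φ, hΦc1, ?_, ?_, ?_⟩
    · intro x hx
      rw [hΦK x (hI₀K hx)]
      exact (hφspec x (hI₀K hx)).2
    · intro x hx
      have hxK := hI₀K hx
      have hd : deriv Φ x = g x := by rw [hΦderiv]; simp only; rw [hprid x hxK]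
      rw [hd, hg]
      simp only
      rw [abs_div, abs_neg]
      have h2 := hPbbd _ (hKR x hxK)
      rw [abs_of_pos (lt_of_lt_of_le hε0 h2), ← div_eq_mul_inv]
      exact div_le_div₀ hA.le (hPabd _ (hKR x hxK)) hε0 h2
    · intro x hx x₂ hx₂ hfx₂
      have hxK := hI₀K hx
      rw [hΦK x hxK]
      exact huniq x (hKpq hxK) x₂ hx₂ (φ x) (hφmem x hxK) hfx₂ (hφspec x hxK).2

private theorem qift_aux
    (f : ℝ × ℝ → ℝ) (hf : ContDiff ℝ 1 f)
    (p q c d : ℝ) (hpq : p ≤ q) (hcd : c ≤ d)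
    (hsub : Set.Icc p q ×ˢ Set.Icc c d ⊆ Set.Icc (0 : ℝ) 1 ×ˢ Set.Icc (0 : ℝ) 1)
    (A : ℝ) (hA : 0 < A)
    (hAbd : ∀ x ∈ Set.Icc p q ×ˢ Set.Icc c d, |pder (1, 0) f x| ≤ A)
    (ε0 : ℝ) (hε0 : 0 < ε0)
    (hε0bd : ∀ x ∈ Set.Icc p q ×ˢ Set.Icc c d, ε0 ≤ |pder (0, 1) f x|)
    (a₁ a₂ : ℝ) (ha : (a₁, a₂) ∈ Set.Icc p q ×ˢ Set.Icc c d)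
    (hfa : f (a₁, a₂) = 0) :
    ∃ c0 : ℝ, 0 < c0 ∧
      ∀ κ : ℝ, κ = c0 * ε0 * A⁻¹ * min (a₂ - c) (d - a₂) →
        ∀ I₀ : Set ℝ, I₀ = Set.Ioo (a₁ - κ) (a₁ + κ) ∩ Set.Icc p q →
          ∃ φ : ℝ → ℝ, ContDiff ℝ 1 φ ∧
            (∀ x₁ ∈ I₀, f (x₁, φ x₁) = 0) ∧
            (∀ x₁ ∈ I₀, |deriv φ x₁| ≤ A * ε0⁻¹) ∧
            (∀ x₁ ∈ I₀, ∀ x₂ ∈ Set.Icc c d, f (x₁, x₂) = 0 → x₂ = φ x₁) := by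
  have hdiff : Differentiable ℝ f := hf.differentiable one_ne_zero
  refine ⟨1/2, by norm_num, ?_⟩
  intro κ hκ I₀ hI₀
  subst hI₀
  by_cases hsign : ∀ z ∈ Set.Icc p q ×ˢ Set.Icc c d, ε0 ≤ pder (0, 1) f z
  · obtain ⟨φ, h1, h2, h3, h4⟩ := key f hf p q c d A hA hAbd ε0 hε0 hsign a₁ a₂ ha hfa κ hκ
    exact ⟨φ, h1, h2, h3, h4⟩
  · push_neg at hsign
    obtain ⟨z₁, hz₁R, hz₁⟩ := hsign
    have hz₁' : pder (0, 1) f z₁ ≤ -ε0 := by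
      rcases abs_cases (pder (0, 1) f z₁) with ⟨h, h'⟩ | ⟨h, h'⟩ <;>
        [(exfalso; have := hε0bd z₁ hz₁R; rw [h] at this; linarith);
         (have := hε0bd z₁ hz₁R; rw [h] at this; linarith)]
    have hneg : ∀ z ∈ Set.Icc p q ×ˢ Set.Icc c d, pder (0, 1) f z ≤ -ε0 := by
      intro z hz
      by_contra hcon
      push_neg at hcon
      have hz' : ε0 ≤ pder (0, 1) f z := by
        rcases abs_cases (pder (0, 1) f z) with ⟨h, h'⟩ | ⟨h, h'⟩ <;>
          [(have := hε0bd z hz; rw [h] at this; linarith);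
           (exfalso; have := hε0bd z hz; rw [h] at this; linarith)]
      have hcont2 : ContinuousOn (fun z => pder (0, 1) f z) (Set.Icc p q ×ˢ Set.Icc c d) := by
        have : (fun z => pder (0, 1) f z) = Pb f := funext fun z => pder01' hdiff z
        rw [this]
        exact (contPb hf).continuousOn
      have hpc : IsPreconnected (Set.Icc p q ×ˢ Set.Icc c d) :=
        ((convex_Icc p q).prod (convex_Icc c d)).isPreconnected
      have h0 : (0:ℝ) ∈ Set.Icc (pder (0,1) f z₁) (pder (0,1) f z) := ⟨by linarith, by linarith⟩
      obtain ⟨w, hwR, hw⟩ := hpc.intermediate_value hz₁R hz hcont2 h0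
      have h9 := hε0bd w hwR
      simp only at hw
      rw [hw] at h9
      simp at h9
      linarith
    -- apply key to -f
    have hfneg : ContDiff ℝ 1 (fun w => -f w) := hf.neg
    have hAbd' : ∀ z ∈ Set.Icc p q ×ˢ Set.Icc c d, |pder (1, 0) (fun w => -f w) z| ≤ A := by
      intro z hz
      rw [pder10_neg, abs_neg]
      exact hAbd z hz
    have hpos' : ∀ z ∈ Set.Icc p q ×ˢ Set.Icc c d, ε0 ≤ pder (0, 1) (fun w => -f w) z := by
      intro z hz
      rw [pder01_neg]
      linarith [hneg z hz]
    obtain ⟨φ, h1, h2, h3, h4⟩ := key (fun w => -f w) hfneg p q c d A hA hAbd' ε0 hε0 hpos'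
      a₁ a₂ ha (by simp [hfa]) κ hκ
    refine ⟨φ, h1, ?_, h3, ?_⟩
    · intro x hx
      have := h2 x hx
      simpa using this
    · intro x hx x₂ hx₂ hfx₂
      exact h4 x hx x₂ hx₂ (by simp [hfx₂])

/-- Quantitative implicit function theorem. -/
theorem quantitative_implicit_function_theorem
    (f : ℝ × ℝ → ℝ) (hf : ContDiff ℝ 1 f)
    (p q c d : ℝ) (hpq : p ≤ q) (hcd : c ≤ d)
    (hsub : Set.Icc p q ×ˢ Set.Icc c d ⊆ Set.Icc (0 : ℝ) 1 ×ˢ Set.Icc (0 : ℝ) 1)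
    (A : ℝ) (hA : 0 < A)
    (hAbd : ∀ x ∈ Set.Icc p q ×ˢ Set.Icc c d, |pder (1, 0) f x| ≤ A)
    (ε0 : ℝ) (hε0 : 0 < ε0)
    (hε0bd : ∀ x ∈ Set.Icc p q ×ˢ Set.Icc c d, ε0 ≤ |pder (0, 1) f x|)
    (a₁ a₂ : ℝ) (ha : (a₁, a₂) ∈ Set.Icc p q ×ˢ Set.Icc c d)
    (hfa : f (a₁, a₂) = 0) :
    ∃ c0 : ℝ, 0 < c0 ∧
      ∀ κ : ℝ, κ = c0 * ε0 * A⁻¹ * min (a₂ - c) (d - a₂) →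
        ∀ I₀ : Set ℝ, I₀ = Set.Ioo (a₁ - κ) (a₁ + κ) ∩ Set.Icc p q →
          ∃ φ : ℝ → ℝ, ContDiff ℝ 1 φ ∧
            (∀ x₁ ∈ I₀, f (x₁, φ x₁) = 0) ∧
            (∀ x₁ ∈ I₀, |deriv φ x₁| ≤ A * ε0⁻¹) ∧
            (∀ x₁ ∈ I₀, ∀ x₂ ∈ Set.Icc c d, f (x₁, x₂) = 0 → x₂ = φ x₁) :=
  qift_aux f hf p q c d hpq hcd hsub A hA hAbd ε0 hε0 hε0bd a₁ a₂ ha hfa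
end
end
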